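/- arXiv:2109.07829 — 2 statements merged into one kernel-verified Lean document; each statement's English description precedes it below -/
import Mathlib

section
/- Let A be an expansive real d×d matrix, let λ_max(A) denote the maximum of |λ| over the complex eigenvalues λ of A, let n ∈ ℕ and ν ∈ ℝ, and assume n · ln(λ_max(A)) = ν · ln|det A|. Then the sequence a_j = |det A|^{−jν} · (1 + ‖A^j‖^n) satisfies a_j ≥ 1 for all j ∈ ℕ; in particular, for every s ∈ (0,∞) the series ∑_{j∈ℕ} a_j^s diverges. -/
/-- The operator norm of a real matrix acting on Euclidean space. -/
noncomputable def matNorm {ι : Type*} [Fintype ι] [DecidableEq ι] (M : Matrix ι ι ℝ) : ℝ :=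
  ‖Matrix.toEuclideanCLM (𝕜 := ℝ) M‖

/-- A complex number `μ` is an eigenvalue of the real matrix `A` if it is a root of the
characteristic polynomial of `A` viewed as a complex matrix. -/
def IsEigenvalue {d : ℕ} (A : Matrix (Fin d) (Fin d) ℝ) (μ : ℂ) : Prop :=
  ((A.map (Complex.ofReal)).charpoly).IsRoot μ

/-- A real `d×d` matrix is expansive if it is invertible and all of its complex eigenvalues `λ`
satisfy `|λ| > 1`. -/
def IsExpansive {d : ℕ} (A : Matrix (Fin d) (Fin d) ℝ) : Prop :=
  IsUnit A ∧ ∀ μ : ℂ, IsEigenvalue A μ → 1 < ‖μ‖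

/-- `lmax` is the maximum of `|λ|` over the complex eigenvalues `λ` of `A`. -/
def IsMaxEigAbs {d : ℕ} (A : Matrix (Fin d) (Fin d) ℝ) (lmax : ℝ) : Prop :=
  (∃ μ : ℂ, IsEigenvalue A μ ∧ ‖μ‖ = lmax) ∧
  ∀ μ : ℂ, IsEigenvalue A μ → ‖μ‖ ≤ lmax

section Aux

open Matrix

/-- Squared-norm bound for `mulVec` through the Euclidean operator norm. -/
lemma sum_sq_mulVec_le {d : ℕ} (M : Matrix (Fin d) (Fin d) ℝ) (x : Fin d → ℝ) :
    ∑ i, (M.mulVec x i) ^ 2 ≤ matNorm M ^ 2 * ∑ i, (x i) ^ 2 := by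
  have h := (Matrix.toEuclideanCLM (𝕜 := ℝ) M).le_opNorm ((WithLp.equiv 2 _).symm x)
  change ‖(WithLp.equiv 2 (Fin d → ℝ)).symm (M.mulVec x)‖ ≤ _ * ‖(WithLp.equiv 2 (Fin d → ℝ)).symm x‖ at h
  have hx : ‖(WithLp.equiv 2 (Fin d → ℝ)).symm x‖ = Real.sqrt (∑ i, (x i) ^ 2) := by
    rw [EuclideanSpace.norm_eq]
    simp [Real.norm_eq_abs, sq_abs]
  have hMx : ‖(WithLp.equiv 2 (Fin d → ℝ)).symm (M.mulVec x)‖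
      = Real.sqrt (∑ i, (M.mulVec x i) ^ 2) := by
    rw [EuclideanSpace.norm_eq]
    simp [Real.norm_eq_abs, sq_abs]
  rw [hx, hMx] at h
  have h2 := mul_self_le_mul_self (Real.sqrt_nonneg _) h
  rw [Real.mul_self_sqrt (by positivity)] at h2
  calc ∑ i, (M.mulVec x i) ^ 2
      ≤ (matNorm M * Real.sqrt (∑ i, (x i) ^ 2)) * (matNorm M * Real.sqrt (∑ i, (x i) ^ 2)) := h2
    _ = matNorm M ^ 2 * (Real.sqrt (∑ i, (x i) ^ 2) * Real.sqrt (∑ i, (x i) ^ 2)) := by ring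
    _ = matNorm M ^ 2 * ∑ i, (x i) ^ 2 := by
        rw [Real.mul_self_sqrt (by positivity)]

/-- A complex eigenvalue of a real matrix is bounded in modulus by the Euclidean operator norm. -/
lemma eig_abs_le_matNorm {d : ℕ} (M : Matrix (Fin d) (Fin d) ℝ) {μ : ℂ}
    {v : Fin d → ℂ} (hv : v ≠ 0)
    (hev : (M.map Complex.ofReal).mulVec v = μ • v) :
    ‖μ‖ ≤ matNorm M := by
  set a : Fin d → ℝ := fun i => (v i).re with ha_def
  set b : Fin d → ℝ := fun i => (v i).im with hb_def
  have hre : ∀ i, M.mulVec a i = μ.re * a i - μ.im * b i := by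
    intro i
    have h := congrFun hev i
    have h1 : ((M.map Complex.ofReal).mulVec v i).re = M.mulVec a i := by
      simp [Matrix.mulVec, dotProduct, Complex.re_sum, a]
    rw [h] at h1
    rw [← h1]
    simp [Complex.mul_re, a, b]
  have him : ∀ i, M.mulVec b i = μ.re * b i + μ.im * a i := by
    intro i
    have h := congrFun hev i
    have h1 : ((M.map Complex.ofReal).mulVec v i).im = M.mulVec b i := by
      simp [Matrix.mulVec, dotProduct, Complex.im_sum, b]
    rw [h] at h1
    rw [← h1]
    simp [Complex.mul_im, a, b]
  have key : ∑ i, (M.mulVec a i) ^ 2 + ∑ i, (M.mulVec b i) ^ 2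
      = ‖μ‖ ^ 2 * (∑ i, (a i) ^ 2 + ∑ i, (b i) ^ 2) := by
    have : ∀ i, (M.mulVec a i) ^ 2 + (M.mulVec b i) ^ 2
        = ‖μ‖ ^ 2 * ((a i) ^ 2 + (b i) ^ 2) := by
      intro i
      rw [hre i, him i, Complex.sq_norm, Complex.normSq_apply]
      ring
    rw [← Finset.sum_add_distrib, ← Finset.sum_add_distrib, Finset.mul_sum]
    exact Finset.sum_congr rfl fun i _ => this i
  have hS : 0 < ∑ i, (a i) ^ 2 + ∑ i, (b i) ^ 2 := by
    obtain ⟨i, hi⟩ := Function.ne_iff.mp hv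
    have hi' : 0 < (a i) ^ 2 + (b i) ^ 2 := by
      rcases Complex.ext_iff.not.mp hi with h
      have : a i ≠ 0 ∨ b i ≠ 0 := by
        by_contra hc
        push_neg at hc
        exact hi (Complex.ext (by simpa using hc.1) (by simpa using hc.2))
      rcases this with h | h
      · have := pow_pos (abs_pos.mpr h) 2
        rw [sq_abs] at this
        positivity
      · have := pow_pos (abs_pos.mpr h) 2
        rw [sq_abs] at this
        positivity
    rw [← Finset.sum_add_distrib]
    exact Finset.sum_pos' (fun j _ => by positivity) ⟨i, Finset.mem_univ i, hi'⟩
  have hb1 := sum_sq_mulVec_le M a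
  have hb2 := sum_sq_mulVec_le M b
  have hcomb : ‖μ‖ ^ 2 * (∑ i, (a i) ^ 2 + ∑ i, (b i) ^ 2)
      ≤ matNorm M ^ 2 * (∑ i, (a i) ^ 2 + ∑ i, (b i) ^ 2) := by
    rw [← key]
    calc ∑ i, (M.mulVec a i) ^ 2 + ∑ i, (M.mulVec b i) ^ 2
        ≤ matNorm M ^ 2 * ∑ i, (a i) ^ 2 + matNorm M ^ 2 * ∑ i, (b i) ^ 2 :=
          add_le_add hb1 hb2
      _ = matNorm M ^ 2 * (∑ i, (a i) ^ 2 + ∑ i, (b i) ^ 2) := by ring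
  have hsq : ‖μ‖ ^ 2 ≤ matNorm M ^ 2 := le_of_mul_le_mul_right
    (by simpa [mul_comm] using hcomb) hS
  have hfin := Real.sqrt_le_sqrt hsq
  have hn : (0 : ℝ) ≤ matNorm M := norm_nonneg _
  rwa [Real.sqrt_sq (norm_nonneg μ), Real.sqrt_sq hn] at hfin

/-- An eigenvector for a root of the complex characteristic polynomial. -/
lemma exists_eigenvector {d : ℕ} (A : Matrix (Fin d) (Fin d) ℝ) {μ : ℂ}
    (hμ : IsEigenvalue A μ) :
    ∃ v : Fin d → ℂ, v ≠ 0 ∧ (A.map Complex.ofReal).mulVec v = μ • v := by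
  set M := A.map Complex.ofReal
  have hdet : (Polynomial.eval (Matrix.scalar (Fin d) μ) (matPolyEquiv (charmatrix M))).det = 0 := by
    have h := hμ
    rw [IsEigenvalue, Polynomial.IsRoot, Matrix.charpoly, eval_det] at h
    exact h
  rw [Matrix.matPolyEquiv_charmatrix, Polynomial.eval_sub, Polynomial.eval_X,
    Polynomial.eval_C] at hdet
  obtain ⟨v, hv, hveq⟩ := Matrix.exists_mulVec_eq_zero_iff.mpr hdet
  refine ⟨v, hv, ?_⟩
  rw [Matrix.sub_mulVec, sub_eq_zero] at hveq
  rw [← hveq, Matrix.scalar_apply, ← Matrix.smul_one_eq_diagonal,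
    Matrix.smul_mulVec, Matrix.one_mulVec]

/-- Eigenvalue power bound: `lmax^j ≤ ‖A^j‖`. -/
lemma pow_eig_le {d : ℕ} (A : Matrix (Fin d) (Fin d) ℝ) {μ : ℂ}
    (hμ : IsEigenvalue A μ) (j : ℕ) :
    ‖μ‖ ^ j ≤ matNorm (A ^ j) := by
  obtain ⟨v, hv, hev⟩ := exists_eigenvector A hμ
  have hpow : ((A ^ j).map Complex.ofReal).mulVec v = (μ ^ j) • v := by
    induction j with
    | zero => simp [Matrix.map_one, Matrix.one_mulVec]
    | succ j ih =>
      have hmap : (A ^ (j + 1)).map Complex.ofReal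
          = (A ^ j).map Complex.ofReal * A.map Complex.ofReal := by
        rw [pow_succ]
        ext i k
        simp [Matrix.mul_apply, Matrix.map_apply]
      rw [hmap, ← Matrix.mulVec_mulVec, hev, Matrix.mulVec_smul, ih, smul_smul, ← pow_succ']
  have := eig_abs_le_matNorm (A ^ j) hv hpow
  simpa [map_pow] using this

end Aux

/-- For an expansive matrix `A` with maximal eigenvalue modulus `λ_max`,
`n ∈ ℕ` and `ν ∈ ℝ` with `n ln λ_max = ν ln|det A|`, the sequence
`a_j = |det A|^{−jν} (1 + ‖A^j‖^n)` satisfies `a_j ≥ 1` for all `j ∈ ℕ`; in particular for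
every `s ∈ (0, ∞)` the series `∑_j a_j^s` diverges. -/
theorem borderline_sequence_not_summable
    (d : ℕ) (A : Matrix (Fin d) (Fin d) ℝ) (hA : IsExpansive A)
    (lmax : ℝ) (hmax : IsMaxEigAbs A lmax)
    (n : ℕ) (ν : ℝ)
    (heq : (n : ℝ) * Real.log lmax = ν * Real.log |A.det|) :
    (∀ j : ℕ, 1 ≤ |A.det| ^ (-(j : ℝ) * ν) * (1 + matNorm (A ^ j) ^ n)) ∧
    ∀ s : ℝ, 0 < s →
      ¬ Summable (fun j : ℕ =>
        (|A.det| ^ (-(j : ℝ) * ν) * (1 + matNorm (A ^ j) ^ n)) ^ s) := by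
  obtain ⟨hUnit, hexp⟩ := hA
  obtain ⟨⟨μ0, hμ0, hμ0abs⟩, hub⟩ := hmax
  have hl1 : 1 < lmax := hμ0abs ▸ hexp μ0 hμ0
  have hl0 : 0 < lmax := lt_trans one_pos hl1
  have hdet0 : A.det ≠ 0 := by
    intro h
    have := (Matrix.isUnit_iff_isUnit_det A).mp hUnit
    rw [h] at this
    exact not_isUnit_zero this
  have hD : (0 : ℝ) < |A.det| := abs_pos.mpr hdet0
  have h1 : ∀ j : ℕ, 1 ≤ |A.det| ^ (-(j : ℝ) * ν) * (1 + matNorm (A ^ j) ^ n) := by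
    intro j
    have hle : lmax ^ j ≤ matNorm (A ^ j) := by
      have := pow_eig_le A hμ0 j
      rwa [hμ0abs] at this
    have key : |A.det| ^ ((j : ℝ) * ν) ≤ 1 + matNorm (A ^ j) ^ n := by
      have hchain : |A.det| ^ ((j : ℝ) * ν) = (lmax ^ j) ^ n := by
        rw [Real.rpow_def_of_pos hD]
        have : Real.log |A.det| * ((j : ℝ) * ν) = (j : ℝ) * (ν * Real.log |A.det|) := by ring
        rw [this, ← heq]
        have : (j : ℝ) * ((n : ℝ) * Real.log lmax) = Real.log lmax * ((j * n : ℕ) : ℝ) := by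
          push_cast; ring
        rw [this, ← Real.rpow_def_of_pos hl0, Real.rpow_natCast, pow_mul]
      rw [hchain]
      calc (lmax ^ j) ^ n ≤ matNorm (A ^ j) ^ n :=
            pow_le_pow_left₀ (by positivity) hle n
        _ ≤ 1 + matNorm (A ^ j) ^ n := by linarith
    have hrw : |A.det| ^ (-(j : ℝ) * ν) = (|A.det| ^ ((j : ℝ) * ν))⁻¹ := by
      rw [← Real.rpow_neg hD.le]
      ring_nf
    rw [hrw, inv_mul_eq_div, le_div_iff₀ (Real.rpow_pos_of_pos hD _), one_mul]
    exact key
  refine ⟨h1, fun s hs hsum => ?_⟩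
  have hterm : ∀ j : ℕ, (1 : ℝ) ≤
      (|A.det| ^ (-(j : ℝ) * ν) * (1 + matNorm (A ^ j) ^ n)) ^ s := fun j =>
    Real.one_le_rpow (h1 j) hs.le
  have hlt := (hsum.tendsto_atTop_zero.eventually_lt_const one_pos).exists
  obtain ⟨j, hj⟩ := hlt
  exact absurd (hterm j) (not_le.mpr hj)
end

section
/- Let A be an expansive real d×d matrix, let λ_max(A) denote the maximum of |λ| over the complex eigenvalues λ of A, let n ∈ ℕ and ν ∈ ℝ, and assume n · ln(λ_max(A)) < ν · ln|det A|. Then ν > 0, and there exist c > 0 and ρ ∈ (0,1) such that for all j ∈ ℕ, a_j := |det A|^{−jν} · (1 + ‖A^j‖^n) ≤ c · ρ^j; in particular, for every s ∈ (0,∞) the series ∑_{j∈ℕ} a_j^s converges. -/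
open Matrix Filter
open scoped ENNReal NNReal Topology

lemma aux_spectrum {d : ℕ} (M : Matrix (Fin d) (Fin d) ℂ) (μ : ℂ) :
    μ ∈ spectrum ℂ M ↔ M.charpoly.IsRoot μ := by
  have key : M.charpoly.eval μ = (algebraMap ℂ (Matrix (Fin d) (Fin d) ℂ) μ - M).det := by
    rw [Matrix.charpoly, eval_det, Matrix.matPolyEquiv_charmatrix]
    rw [Polynomial.eval_sub, Polynomial.eval_X, Polynomial.eval_C]
    congr 1
  rw [spectrum.mem_iff, Matrix.isUnit_iff_isUnit_det, isUnit_iff_ne_zero, not_not,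
    Polynomial.IsRoot, key]

lemma aux_one_lt_prod (s : Multiset ℝ) (h : ∀ x ∈ s, 1 < x) (hs : s ≠ 0) : 1 < s.prod := by
  induction s using Multiset.induction_on with
  | empty => simp at hs
  | cons a t ih =>
    rw [Multiset.prod_cons]
    by_cases ht : t = 0
    · subst ht; simpa using h a (by simp)
    · have h1 : 1 < a := h a (by simp)
      have h2 : 1 < t.prod := ih (fun x hx => h x (by simp [hx])) ht
      nlinarith

lemma aux_det (d : ℕ) (A : Matrix (Fin d) (Fin d) ℝ)
    (hA2 : ∀ μ : ℂ, IsEigenvalue A μ → 1 < ‖μ‖) (hd : d ≠ 0) :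
    1 < |A.det| := by
  set B := A.map Complex.ofReal with hB
  have hdet : (B.det : ℂ) = Complex.ofReal A.det := (RingHom.map_det Complex.ofRealHom A).symm
  have habs : ‖B.det‖ = |A.det| := by rw [hdet, Complex.norm_real, Real.norm_eq_abs]
  rw [← habs, Matrix.det_eq_prod_roots_charpoly, show ‖B.charpoly.roots.prod‖ = (B.charpoly.roots.map (‖·‖)).prod from map_multiset_prod (normHom (α := ℂ)) _]
  have hcard : B.charpoly.roots.card = d := by
    rw [Polynomial.splits_iff_card_roots.mp (IsAlgClosed.splits _),
      Matrix.charpoly_natDegree_eq_dim, Fintype.card_fin]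
  apply aux_one_lt_prod
  · intro x hx
    obtain ⟨μ, hμ, rfl⟩ := Multiset.mem_map.mp hx
    exact hA2 μ ((Polynomial.mem_roots (Polynomial.Monic.ne_zero
      (Matrix.charpoly_monic B))).mp hμ)
  · intro h0
    have := congrArg Multiset.card h0
    rw [Multiset.card_map, hcard] at this
    simp at this
    exact hd this

lemma aux_norm_le {d : ℕ} (M : Matrix (Fin d) (Fin d) ℝ) :
    matNorm M ≤ ‖Matrix.toEuclideanCLM (𝕜 := ℂ) (M.map Complex.ofReal)‖ := by
  apply ContinuousLinearMap.opNorm_le_bound _ (norm_nonneg _)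
  intro x
  set y : EuclideanSpace ℂ (Fin d) :=
    (WithLp.equiv 2 (Fin d → ℂ)).symm (fun i => (x i : ℂ)) with hy
  have hny : ‖y‖ = ‖x‖ := by
    rw [EuclideanSpace.norm_eq, EuclideanSpace.norm_eq]
    congr 1
    apply Finset.sum_congr rfl
    intro i _
    simp [hy]
  have happ : ‖Matrix.toEuclideanCLM (𝕜 := ℝ) M x‖
      = ‖Matrix.toEuclideanCLM (𝕜 := ℂ) (M.map Complex.ofReal) y‖ := by
    rw [EuclideanSpace.norm_eq, EuclideanSpace.norm_eq]
    congr 1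
    apply Finset.sum_congr rfl
    intro i _
    have h1 : (Matrix.toEuclideanCLM (𝕜 := ℝ) M x) i = (M *ᵥ (WithLp.equiv 2 _ x)) i := by
      rfl
    have h2 : (Matrix.toEuclideanCLM (𝕜 := ℂ) (M.map Complex.ofReal) y) i
        = ((M.map Complex.ofReal) *ᵥ (fun j => (x j : ℂ))) i := by
      rfl
    have h3 : ((M.map Complex.ofReal) *ᵥ (fun j => ((x j : ℝ) : ℂ))) i
        = (((M *ᵥ (WithLp.equiv 2 (Fin d → ℝ)) x) i : ℝ) : ℂ) := by
      simp only [Matrix.mulVec, dotProduct, Matrix.map_apply]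
      norm_cast
    rw [h1, h2, h3, Complex.norm_real]
  rw [happ, ← hny]
  exact ContinuousLinearMap.le_opNorm _ y

lemma aux_gelfand (d : ℕ) (B : Matrix (Fin d) (Fin d) ℂ) (lmax r : ℝ)
    (hex : ∃ μ : ℂ, B.charpoly.IsRoot μ ∧ ‖μ‖ = lmax)
    (hub : ∀ μ : ℂ, B.charpoly.IsRoot μ → ‖μ‖ ≤ lmax)
    (hl0 : 0 ≤ lmax) (hr : lmax < r) (hr1 : 1 ≤ r) :
    ∃ C : ℝ, 1 ≤ C ∧ ∀ j : ℕ,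
      ‖Matrix.toEuclideanCLM (𝕜 := ℂ) (B ^ j)‖ ≤ C * r ^ j := by
  set T := Matrix.toEuclideanCLM (𝕜 := ℂ) B with hT
  have hTpow : ∀ j : ℕ, Matrix.toEuclideanCLM (𝕜 := ℂ) (B ^ j) = T ^ j := fun j => by
    rw [hT, map_pow]
  have hspecT : spectrum ℂ T = spectrum ℂ B := AlgEquiv.spectrum_eq _ B
  have hsr : spectralRadius ℂ T = ENNReal.ofReal lmax := by
    rw [spectralRadius]
    apply le_antisymm
    · refine iSup₂_le fun k hk => ?_
      rw [hspecT, aux_spectrum] at hk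
      rw [← enorm_eq_nnnorm, ← ofReal_norm]
      exact ENNReal.ofReal_le_ofReal (hub k hk)
    · obtain ⟨μ, hμ, hμa⟩ := hex
      have hmem : μ ∈ spectrum ℂ T := by rw [hspecT, aux_spectrum]; exact hμ
      have : ENNReal.ofReal lmax = (‖μ‖₊ : ℝ≥0∞) := by
        rw [← enorm_eq_nnnorm, ← ofReal_norm, hμa]
      rw [this]
      exact le_iSup₂ (f := fun k (_ : k ∈ spectrum ℂ T) => (‖k‖₊ : ℝ≥0∞)) μ hmem
  have htend := spectrum.pow_nnnorm_pow_one_div_tendsto_nhds_spectralRadius T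
  rw [hsr] at htend
  have hlt : ENNReal.ofReal lmax < ENNReal.ofReal r :=
    (ENNReal.ofReal_lt_ofReal_iff (lt_of_le_of_lt hl0 hr)).mpr hr
  have hev : ∀ᶠ j : ℕ in atTop, (‖T ^ j‖₊ : ℝ≥0∞) ^ (1 / (j:ℝ)) < ENNReal.ofReal r :=
    htend.eventually_lt_const hlt
  obtain ⟨N, hN⟩ := eventually_atTop.mp hev
  have hbig : ∀ j : ℕ, N + 1 ≤ j → ‖T ^ j‖ ≤ r ^ j := by
    intro j hj
    have hj0 : (j : ℝ) ≠ 0 := Nat.cast_ne_zero.mpr (by omega)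
    have h1 := ENNReal.rpow_le_rpow (le_of_lt (hN j (by omega))) (Nat.cast_nonneg j : (0:ℝ) ≤ j)
    rw [← ENNReal.rpow_mul,
      one_div, inv_mul_cancel₀ hj0, ENNReal.rpow_one] at h1
    have h2 : (ENNReal.ofReal r) ^ ((j:ℝ)) = ENNReal.ofReal (r ^ j) := by
      rw [← Real.rpow_natCast r j,
        ENNReal.ofReal_rpow_of_pos (lt_of_lt_of_le zero_lt_one hr1)]
    have h3 : (‖T ^ j‖₊ : ℝ≥0∞) ≤ ENNReal.ofReal (r ^ j) := by rw [← h2]; exact h1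
    rw [← enorm_eq_nnnorm, ← ofReal_norm] at h3
    exact (ENNReal.ofReal_le_ofReal_iff (by positivity)).mp h3
  refine ⟨(Finset.range (N + 1)).sum (fun j => ‖T ^ j‖) + 1, ?_, ?_⟩
  · have : (0:ℝ) ≤ (Finset.range (N + 1)).sum (fun j => ‖T ^ j‖) :=
      Finset.sum_nonneg fun j _ => norm_nonneg _
    linarith
  · intro j
    rw [hTpow]
    set C := (Finset.range (N + 1)).sum (fun j => ‖T ^ j‖) + 1 with hC
    have hC1 : 1 ≤ C := by
      have : (0:ℝ) ≤ (Finset.range (N + 1)).sum (fun j => ‖T ^ j‖) :=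
        Finset.sum_nonneg fun j _ => norm_nonneg _
      rw [hC]; linarith
    rcases le_or_gt (N + 1) j with hj | hj
    · have h4 : (1:ℝ) * r ^ j ≤ C * r ^ j :=
        mul_le_mul_of_nonneg_right hC1 (by positivity)
      calc ‖T ^ j‖ ≤ r ^ j := hbig j hj
        _ = 1 * r ^ j := (one_mul _).symm
        _ ≤ C * r ^ j := h4
    · have h5 : ‖T ^ j‖ ≤ C := by
        rw [hC]
        have := Finset.single_le_sum (f := fun j => ‖T ^ j‖)
          (fun i _ => norm_nonneg _) (Finset.mem_range.mpr hj)
        linarith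
      have h6 : (1:ℝ) ≤ r ^ j := one_le_pow₀ hr1
      calc ‖T ^ j‖ ≤ C := h5
        _ = C * 1 := (mul_one _).symm
        _ ≤ C * r ^ j := mul_le_mul_of_nonneg_left h6 (by linarith)

/-- For an expansive matrix `A` with maximal eigenvalue modulus `λ_max`,
`n ∈ ℕ` and `ν ∈ ℝ` with `n ln λ_max < ν ln|det A|`: one has `ν > 0`, and there exist `c > 0`
and `ρ ∈ (0,1)` with `a_j := |det A|^{−jν} (1 + ‖A^j‖^n) ≤ c ρ^j` for all `j ∈ ℕ`; in
particular `∑_j a_j^s` converges for every `s ∈ (0,∞)`. -/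
theorem strict_inequality_sequence_summable
    (d : ℕ) (A : Matrix (Fin d) (Fin d) ℝ) (hA : IsExpansive A)
    (lmax : ℝ) (hmax : IsMaxEigAbs A lmax)
    (n : ℕ) (ν : ℝ)
    (hlt : (n : ℝ) * Real.log lmax < ν * Real.log |A.det|) :
    0 < ν ∧
    (∃ c : ℝ, 0 < c ∧ ∃ ρ ∈ Set.Ioo (0 : ℝ) 1, ∀ j : ℕ,
      |A.det| ^ (-(j : ℝ) * ν) * (1 + matNorm (A ^ j) ^ n) ≤ c * ρ ^ j) ∧
    ∀ s : ℝ, 0 < s →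
      Summable (fun j : ℕ =>
        (|A.det| ^ (-(j : ℝ) * ν) * (1 + matNorm (A ^ j) ^ n)) ^ s) := by
  obtain ⟨⟨μ0, hμ0, hμ0a⟩, hub⟩ := hmax
  have hd : d ≠ 0 := by
    intro h
    subst h
    have h1 : (A.map Complex.ofReal).charpoly = 1 := by
      rw [Matrix.charpoly, Matrix.det_isEmpty]
    rw [IsEigenvalue, h1] at hμ0
    simp [Polynomial.IsRoot] at hμ0
  have hlmax : 1 < lmax := hμ0a ▸ hA.2 μ0 hμ0
  have hD : 1 < |A.det| := aux_det d A hA.2 hd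
  have hDpos : (0:ℝ) < |A.det| := by linarith
  have hlogD : 0 < Real.log |A.det| := Real.log_pos hD
  have hν : 0 < ν := by
    have h1 : (0:ℝ) ≤ (n:ℝ) * Real.log lmax :=
      mul_nonneg (Nat.cast_nonneg n) (Real.log_nonneg (le_of_lt hlmax))
    nlinarith
  have hrsel : ∃ r : ℝ, lmax < r ∧ (n:ℝ) * Real.log r < ν * Real.log |A.det| := by
    rcases Nat.eq_zero_or_pos n with hn | hn
    · refine ⟨lmax + 1, by linarith, ?_⟩
      rw [hn]
      push_cast
      nlinarith
    · have hnpos : (0:ℝ) < n := by exact_mod_cast hn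
      set L := Real.log lmax with hL
      set Mv := ν * Real.log |A.det| / n with hMv
      have hLM : L < Mv := by
        rw [hMv, lt_div_iff₀ hnpos]
        nlinarith
      refine ⟨Real.exp ((L + Mv)/2), ?_, ?_⟩
      · calc lmax = Real.exp L := (Real.exp_log (by linarith : (0:ℝ) < lmax)).symm
          _ < Real.exp ((L + Mv)/2) := Real.exp_lt_exp.mpr (by linarith)
      · rw [Real.log_exp]
        have hnM : (n:ℝ) * Mv = ν * Real.log |A.det| := by
          rw [hMv]; field_simp
        nlinarith
  obtain ⟨r, hrl, hrlog⟩ := hrsel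
  have hr1 : 1 < r := lt_trans hlmax hrl
  obtain ⟨C, hC1, hCb⟩ := aux_gelfand d (A.map Complex.ofReal) lmax r
    ⟨μ0, hμ0, hμ0a⟩ hub (by linarith) hrl (le_of_lt hr1)
  have hAj : ∀ j : ℕ, matNorm (A ^ j) ≤ C * r ^ j := by
    intro j
    have h1 := aux_norm_le (A ^ j)
    have h2 : (A ^ j).map Complex.ofReal = (A.map Complex.ofReal) ^ j := by
      have h3 := map_pow (RingHom.mapMatrix (m := Fin d) Complex.ofRealHom) A j
      simp only [RingHom.mapMatrix_apply] at h3; exact h3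
    rw [h2] at h1
    exact le_trans h1 (hCb j)
  set ρ := |A.det| ^ (-ν) * r ^ n with hρ
  have hρpos : 0 < ρ := by
    rw [hρ]
    have := Real.rpow_pos_of_pos hDpos (-ν)
    positivity
  have hρlt : ρ < 1 := by
    have hlog : Real.log ρ < 0 := by
      rw [hρ, Real.log_mul (by positivity) (by positivity), Real.log_rpow hDpos,
        Real.log_pow]
      push_cast
      nlinarith
    calc ρ = Real.exp (Real.log ρ) := (Real.exp_log hρpos).symm
      _ < Real.exp 0 := Real.exp_lt_exp.mpr hlog
      _ = 1 := Real.exp_zero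
  have hcpos : (0:ℝ) < 1 + C ^ n := by positivity
  have hkey : ∀ j : ℕ,
      |A.det| ^ (-(j : ℝ) * ν) * (1 + matNorm (A ^ j) ^ n) ≤ (1 + C ^ n) * ρ ^ j := by
    intro j
    have hm0 : 0 ≤ matNorm (A ^ j) := norm_nonneg _
    have hmb : matNorm (A ^ j) ^ n ≤ C ^ n * (r ^ n) ^ j := by
      calc matNorm (A ^ j) ^ n ≤ (C * r ^ j) ^ n := pow_le_pow_left₀ hm0 (hAj j) n
        _ = C ^ n * (r ^ n) ^ j := by rw [mul_pow, ← pow_mul, ← pow_mul, Nat.mul_comm]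
    have h1rn : (1:ℝ) ≤ (r ^ n) ^ j := one_le_pow₀ (one_le_pow₀ (le_of_lt hr1))
    have hsum : 1 + matNorm (A ^ j) ^ n ≤ (1 + C ^ n) * (r ^ n) ^ j := by nlinarith
    have hDj : |A.det| ^ (-(j : ℝ) * ν) = (|A.det| ^ (-ν)) ^ j := by
      rw [show -(j:ℝ) * ν = (-ν) * (j:ℝ) by ring, Real.rpow_mul (le_of_lt hDpos),
        Real.rpow_natCast]
    have hrpos : 0 < |A.det| ^ (-(j : ℝ) * ν) := Real.rpow_pos_of_pos hDpos _
    calc |A.det| ^ (-(j : ℝ) * ν) * (1 + matNorm (A ^ j) ^ n)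
        ≤ |A.det| ^ (-(j : ℝ) * ν) * ((1 + C ^ n) * (r ^ n) ^ j) :=
          mul_le_mul_of_nonneg_left hsum (le_of_lt hrpos)
      _ = (1 + C ^ n) * ρ ^ j := by rw [hDj, hρ, mul_pow]; ring
  refine ⟨hν, ⟨1 + C ^ n, hcpos, ρ, ⟨hρpos, hρlt⟩, hkey⟩, ?_⟩
  intro s hs
  have hann : ∀ j : ℕ, 0 ≤ |A.det| ^ (-(j : ℝ) * ν) * (1 + matNorm (A ^ j) ^ n) := by
    intro j
    have := Real.rpow_pos_of_pos hDpos (-(j : ℝ) * ν)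
    have hm0 : 0 ≤ matNorm (A ^ j) := norm_nonneg _
    positivity
  refine Summable.of_nonneg_of_le (f := fun j => (1 + C ^ n) ^ s * (ρ ^ s) ^ j)
    (fun j => Real.rpow_nonneg (hann j) s) ?_ ?_
  · intro j
    have h1 : (|A.det| ^ (-(j : ℝ) * ν) * (1 + matNorm (A ^ j) ^ n)) ^ s
        ≤ ((1 + C ^ n) * ρ ^ j) ^ s :=
      Real.rpow_le_rpow (hann j) (hkey j) (le_of_lt hs)
    have h2 : ((1 + C ^ n) * ρ ^ j) ^ s = (1 + C ^ n) ^ s * (ρ ^ s) ^ j := by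
      rw [Real.mul_rpow (le_of_lt hcpos) (by positivity)]
      congr 1
      rw [← Real.rpow_natCast ρ j, ← Real.rpow_natCast (ρ ^ s) j,
        ← Real.rpow_mul (le_of_lt hρpos), ← Real.rpow_mul (le_of_lt hρpos), mul_comm]
    rw [h2] at h1
    exact h1
  · exact Summable.mul_left _ (summable_geometric_of_lt_one
      (Real.rpow_nonneg (le_of_lt hρpos) s)
      (Real.rpow_lt_one (le_of_lt hρpos) hρlt hs))
end
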